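/- arXiv:2007.05108 — 2 statements merged into one kernel-verified Lean document; each statement's English description precedes it below -/
import Mathlib

section
/- (Read's formula) For all integers n ≥ c ≥ 1, the number of pairs (G, (U_1, …, U_c)), where G = ([n], E) is a labelled simple graph and (U_1, …, U_c) is an ordered partition of [n] into nonempty parts such that each U_i is an independent set of G, equals Σ_{(n_1,…,n_c)} (n!/(n_1!⋯n_c!)) · 2^{C(n,2) − Σ_{i∈[c]} C(n_i,2)}, where the sum is over all ordered c-partitions (n_1,…,n_c) of n into positive integers. -/
open BigOperators

/-- Ordered c-partitions of n into positive integers. -/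
def partitions (c n : ℕ) : Finset (Fin c → ℕ) :=
  (Finset.Nat.antidiagonalTuple c n).filter fun ν => ∀ i, 0 < ν i

/-!
Record an ordered partition `U` of `[n]` by its block map `f : [n] → [c]`. The parts are
independent in `G` exactly when `G` is a subgraph of the complete multipartite graph
`(⊤ : SimpleGraph (Fin c)).comap f`, which has `C(n,2) - ∑ C(|U i|, 2)` edges, so each partition
carries a power of two of graphs depending only on its block sizes `ν`. The ordered partitions with
block sizes `ν` are counted by choosing the first block and recursing, which reproduces the
recursion `multinomial ν = C(n, ν 0) * multinomial (tail ν)`.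
-/

open Finset
open scoped Classical

theorem card_subtype_prod_eq_sum {α β : Type*} [Fintype α] [Fintype β] (P : β → Prop)
    (Q : α → β → Prop) [DecidablePred P] [∀ b, DecidablePred (Q · b)] :
    Nat.card {p : α × β // P p.2 ∧ Q p.1 p.2} = ∑ b with P b, #{a | Q a b} := by
  rw [Nat.card_eq_fintype_card, Fintype.card_subtype, card_filter, Fintype.sum_prod_type_right,
    sum_filter]
  refine sum_congr rfl fun b _ => ?_
  by_cases hb : P b <;> simp [hb]

lemma Nat.multinomial_univ_fin_succ {c : ℕ} (ν : Fin (c + 1) → ℕ) :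
    Nat.multinomial univ ν = (∑ i, ν i).choose (ν 0) * Nat.multinomial univ (Fin.tail ν) := by
  simp only [Fin.univ_succ, Nat.multinomial_cons, sum_cons, sum_map]
  congr 1
  simp only [Nat.multinomial, sum_map, prod_map]
  rfl

lemma Nat.mul_self_eq_two_mul_choose_two_add (m : ℕ) : m * m = 2 * m.choose 2 + m := by
  rw [Nat.choose_two_right, Nat.mul_div_cancel' (Nat.even_mul_pred_self m).two_dvd]
  cases m <;> simp [Nat.mul_succ]

section OrderedPartitions

variable {α : Type*} [Fintype α] [DecidableEq α]

noncomputable def orderedPartitions (s : Finset α) {c : ℕ} (ν : Fin c → ℕ) :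
    Finset (Fin c → Finset α) :=
  {U | (∀ i, U i ⊆ s) ∧ (∀ v ∈ s, ∃! i, v ∈ U i) ∧ ∀ i, #(U i) = ν i}

lemma card_eq_of_mem_orderedPartitions {c : ℕ} {s : Finset α} {ν : Fin c → ℕ}
    {U : Fin c → Finset α} (hU : U ∈ orderedPartitions s ν) (i : Fin c) : #(U i) = ν i :=
  (mem_filter.1 hU).2.2.2 i

lemma cons_mem_orderedPartitions_iff {c : ℕ} {s t : Finset α} {ν : Fin (c + 1) → ℕ}
    {V : Fin c → Finset α} :
    Fin.cons t V ∈ orderedPartitions s ν ↔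
      (t ⊆ s ∧ #t = ν 0) ∧ V ∈ orderedPartitions (s \ t) (Fin.tail ν) := by
  simp only [orderedPartitions, mem_filter, mem_univ, true_and, Fin.forall_fin_succ,
    Fin.cons_zero, Fin.cons_succ, ExistsUnique, Fin.exists_fin_succ, mem_sdiff, Fin.tail,
    subset_iff]
  grind

theorem card_orderedPartitions {c : ℕ} (s : Finset α) (ν : Fin c → ℕ)
    (hν : ∑ i, ν i = #s) :
    #(orderedPartitions s ν) = Nat.multinomial univ ν := by
  induction c generalizing s with
  | zero =>
    obtain rfl : s = ∅ := by simpa [eq_comm] using hν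
    simp [orderedPartitions]
  | succ c ih =>
    have hsplit : #(orderedPartitions s ν) =
        #((s.powersetCard (ν 0)).sigma fun t => orderedPartitions (s \ t) (Fin.tail ν)) := by
      refine card_nbij' (fun U => ⟨U 0, Fin.tail U⟩) (fun p => Fin.cons p.1 p.2) ?_ ?_ ?_ ?_
      · intro U hU
        rw [← Fin.cons_self_tail U, mem_coe, cons_mem_orderedPartitions_iff] at hU
        simpa [mem_sigma, mem_powersetCard] using hU
      · rintro ⟨t, V⟩ h
        simpa [cons_mem_orderedPartitions_iff, mem_powersetCard, and_assoc] using h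
      · intro U _
        exact Fin.cons_self_tail U
      · rintro ⟨t, V⟩ _
        simp
    rw [hsplit, card_sigma, sum_congr rfl fun t ht => ih (s \ t) (Fin.tail ν) ?_, sum_const,
      card_powersetCard, smul_eq_mul, Nat.multinomial_univ_fin_succ, hν]
    obtain ⟨hts, htcard⟩ := mem_powersetCard.1 ht
    rw [card_sdiff_of_subset hts, htcard, ← hν, Fin.sum_univ_succ]
    simp [Fin.tail]

lemma filter_card_parts_eq_orderedPartitions {c : ℕ} {T : Finset (Fin c → Finset α)}
    (hT : ∀ U, U ∈ T ↔ (∀ v, ∃! i, v ∈ U i) ∧ ∀ i, (U i).Nonempty)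
    {ν : Fin c → ℕ} (hν : ∀ i, 0 < ν i) :
    {U ∈ T | (fun i => #(U i)) = ν} = orderedPartitions univ ν := by
  ext U
  simpa [orderedPartitions, funext_iff, hT] using fun hcard _ i => card_pos.1 (hcard i ▸ hν i)

end OrderedPartitions

lemma exists_eq_fiber_of_existsUnique {V ι : Type*} [Fintype V] [DecidableEq ι]
    {U : ι → Finset V} (hU : ∀ v, ∃! i, v ∈ U i) :
    ∃ f : V → ι, U = fun i => ({v | f v = i} : Finset V) := by
  choose f hf huniq using hU
  refine ⟨f, funext fun i => ?_⟩
  ext v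
  simpa using ⟨fun h => (huniq v i h).symm, fun h => h ▸ hf v⟩

lemma sum_card_eq_card_of_existsUnique {V ι : Type*} [Fintype V] [Fintype ι] [DecidableEq ι]
    {U : ι → Finset V} (hU : ∀ v, ∃! i, v ∈ U i) : ∑ i, #(U i) = Fintype.card V := by
  obtain ⟨f, rfl⟩ := exists_eq_fiber_of_existsUnique hU
  exact (card_eq_sum_card_fiberwise fun v _ => mem_univ (f v)).symm

lemma mem_partitions_iff {c n : ℕ} {ν : Fin c → ℕ} :
    ν ∈ partitions c n ↔ ∑ i, ν i = n ∧ ∀ i, 0 < ν i := by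
  simp [partitions, Finset.Nat.mem_antidiagonalTuple]

lemma card_parts_mem_partitions {V : Type*} [Fintype V] {c : ℕ} {U : Fin c → Finset V}
    (hU : ∀ v, ∃! i, v ∈ U i) (hne : ∀ i, (U i).Nonempty) :
    (fun i => #(U i)) ∈ partitions c (Fintype.card V) :=
  mem_partitions_iff.2 ⟨sum_card_eq_card_of_existsUnique hU, fun i => card_pos.2 (hne i)⟩

namespace SimpleGraph

variable {V : Type*} [Fintype V]

theorem card_filter_le_eq_two_pow [DecidableEq V] (H : SimpleGraph V) [Fintype H.edgeSet]
    [DecidablePred (· ≤ H)] :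
    #{G : SimpleGraph V | G ≤ H} = 2 ^ #H.edgeFinset := by
  rw [← card_powerset]
  refine card_nbij' (fun G => G.edgeFinset) (fun s => fromEdgeSet s) ?_ ?_ ?_ ?_
  · intro G hG
    simpa using edgeFinset_mono (mem_filter.1 hG).2
  · intro s hs
    simp only [coe_powerset, Set.mem_preimage, Set.mem_powerset_iff, coe_subset] at hs
    simp only [coe_filter, mem_univ, true_and, Set.mem_ofPred_eq]
    rw [← edgeSet_subset_edgeSet, edgeSet_fromEdgeSet]
    exact Set.sdiff_subset.trans (by rwa [← coe_edgeFinset, coe_subset])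
  · intro G _
    simp
  · intro s hs
    simp only [coe_powerset, Set.mem_preimage, Set.mem_powerset_iff, coe_subset] at hs
    ext e
    simpa using fun he => not_isDiag_of_mem_edgeFinset (hs he)

/-- Counts ordered pairs of vertices: `2 |E| + ∑ |f⁻¹ i|² = |V|²`. -/
theorem card_edgeFinset_comap_top_add {ι : Type*} [Fintype ι] [DecidableEq ι] (f : V → ι) :
    #((⊤ : SimpleGraph ι).comap f).edgeFinset + ∑ i, (#{v | f v = i}).choose 2 =
      (Fintype.card V).choose 2 := by
  have hedges :
      2 * #((⊤ : SimpleGraph ι).comap f).edgeFinset = #{p : V × V | f p.1 ≠ f p.2} := by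
    simp [two_mul_card_edgeFinset]
  have hsame : #{p : V × V | f p.1 = f p.2} = ∑ i, #{v | f v = i} * #{v | f v = i} := by
    rw [card_eq_sum_card_fiberwise (f := fun p => f p.1) (t := univ) fun _ _ => mem_univ _]
    refine sum_congr rfl fun i _ => ?_
    rw [← card_product]
    congr 1
    ext p
    simp only [mem_filter, mem_univ, true_and, mem_product]
    grind
  have hpairs := card_filter_add_card_filter_not (s := (univ : Finset (V × V)))
    fun p => f p.1 = f p.2
  have hsum : ∑ i, #{v | f v = i} = Fintype.card V :=
    (card_eq_sum_card_fiberwise (f := f) (t := univ) fun _ _ => mem_univ _).symm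
  simp only [card_univ, Fintype.card_prod, ← ne_eq] at hpairs
  simp only [Nat.mul_self_eq_two_mul_choose_two_add, sum_add_distrib, ← mul_sum, hsum] at hsame
  have := Nat.mul_self_eq_two_mul_choose_two_add (Fintype.card V)
  omega

end SimpleGraph

theorem card_graphs_with_independent_parts {V ι : Type*} [Fintype V] [DecidableEq V]
    [Fintype ι] [DecidableEq ι] (U : ι → Finset V) (hU : ∀ v, ∃! i, v ∈ U i)
    [DecidablePred fun G : SimpleGraph V => ∀ i, ∀ u ∈ U i, ∀ v ∈ U i, ¬ G.Adj u v] :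
    #{G : SimpleGraph V | ∀ i, ∀ u ∈ U i, ∀ v ∈ U i, ¬ G.Adj u v} =
      2 ^ ((Fintype.card V).choose 2 - ∑ i, (#(U i)).choose 2) := by
  obtain ⟨f, rfl⟩ := exists_eq_fiber_of_existsUnique hU
  rw [filter_congr (q := (· ≤ (⊤ : SimpleGraph ι).comap f)) fun G _ => ?_,
    SimpleGraph.card_filter_le_eq_two_pow, ← SimpleGraph.card_edgeFinset_comap_top_add f,
    Nat.add_sub_cancel]
  simp only [mem_filter, mem_univ, true_and]
  exact ⟨fun h u v huv heq => h _ u rfl v heq.symm huv,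
    fun h i u hu v hv huv => h huv (hu.trans hv.symm)⟩

theorem read_formula_general (n c : ℕ) :
    Nat.card {p : SimpleGraph (Fin n) × (Fin c → Finset (Fin n)) //
        (∀ v : Fin n, ∃! i, v ∈ p.2 i) ∧ (∀ i, (p.2 i).Nonempty) ∧
        ∀ i, ∀ u ∈ p.2 i, ∀ v ∈ p.2 i, ¬ p.1.Adj u v} =
      ∑ ν ∈ partitions c n,
        Nat.multinomial Finset.univ ν * 2 ^ (n.choose 2 - ∑ i, (ν i).choose 2) := by
  simp_rw [← and_assoc]
  rw [card_subtype_prod_eq_sum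
      (fun U : Fin c → Finset (Fin n) => (∀ v, ∃! i, v ∈ U i) ∧ ∀ i, (U i).Nonempty)
      fun (G : SimpleGraph (Fin n)) U => ∀ i, ∀ u ∈ U i, ∀ v ∈ U i, ¬ G.Adj u v,
    sum_congr rfl fun U hU => card_graphs_with_independent_parts U (mem_filter.1 hU).2.1,
    Fintype.card_fin, ← sum_fiberwise_of_maps_to fun U hU =>
      Fintype.card_fin n ▸ card_parts_mem_partitions (mem_filter.1 hU).2.1 (mem_filter.1 hU).2.2]
  refine sum_congr rfl fun ν hν => ?_
  obtain ⟨hνsum, hνpos⟩ := mem_partitions_iff.1 hν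
  rw [filter_card_parts_eq_orderedPartitions mem_filter_univ hνpos,
    sum_congr rfl fun U hU => ?_, sum_const, card_orderedPartitions _ _ (by simpa using hνsum),
    smul_eq_mul]
  simp only [card_eq_of_mem_orderedPartitions hU]

/-- Read's formula: the number of pairs `(G, (U_1, …, U_c))` of a labelled simple graph on `[n]`
together with an ordered partition of `[n]` into nonempty independent sets of `G`. -/
theorem read_formula (n c : ℕ) (hc : 1 ≤ c) (hn : c ≤ n) :
    Nat.card {p : SimpleGraph (Fin n) × (Fin c → Finset (Fin n)) //
        (∀ v : Fin n, ∃! i, v ∈ p.2 i) ∧ (∀ i, (p.2 i).Nonempty) ∧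
        ∀ i, ∀ u ∈ p.2 i, ∀ v ∈ p.2 i, ¬ p.1.Adj u v} =
      ∑ ν ∈ partitions c n,
        Nat.multinomial Finset.univ ν * 2 ^ (n.choose 2 - ∑ i, (ν i).choose 2) :=
  read_formula_general n c
end

section
/- Let F be a field and G = ([n], E) a labelled simple graph, with 𝒜_G ≤ Λ(n,F) the alternating matrix space spanned by the elementary alternating matrices A_{i,j} for {i,j} ∈ E. Then the independence number of G equals the totally-isotropic number of 𝒜_G, i.e., α(G) = α(𝒜_G). -/
open Matrix BigOperators

/-- The elementary alternating matrix `A_{i,j}`. -/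
def elemAlt (n : ℕ) (F : Type) [Field F] (i j : Fin n) : Matrix (Fin n) (Fin n) F :=
  Matrix.single i j 1 - Matrix.single j i 1

/-- The alternating matrix space `𝒜_G` spanned by the elementary alternating matrices of the
edges of a graph `G`. -/
def graphSpace (n : ℕ) (F : Type) [Field F] (G : SimpleGraph (Fin n)) :
    Submodule F (Matrix (Fin n) (Fin n) F) :=
  Submodule.span F {A | ∃ i j, G.Adj i j ∧ A = elemAlt n F i j}

/-!
An independent set `s` spans the coordinate subspace `⟨e_i : i ∈ s⟩`, on which the form
`u_i v_j - u_j v_i` of every edge vanishes because an edge has an endpoint outside `s`.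
Conversely, the coordinate functionals restricted to a `d`-dimensional subspace `U` span `U^*`,
so `d` of them form a basis of `U^*`; its dual basis `(w_i)_{i ∈ s}` in `U` has `w_i(j) = δ_ij`
on `s`, and an edge `{i, j}` inside `s` would give `1 = w_i(i) w_j(j) - w_i(j) w_j(i) = 0`.
-/

/-- `s` is the set of pivot columns of the reduced row echelon basis `w` of `U`. -/
theorem Submodule.exists_finset_card_eq_finrank_biorthogonal {ι F : Type*} [Field F] [Finite ι]
    [DecidableEq ι] (U : Submodule F (ι → F)) :
    ∃ (s : Finset ι) (w : s → U), s.card = Module.finrank F U ∧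
      ∀ i j : s, (w i : ι → F) j = if i = j then 1 else 0 := by
  let φ : ι → Module.Dual F U := fun i => (LinearMap.proj i).comp U.subtype
  have hspan : Submodule.span F (Set.range φ) = ⊤ := by
    refine eq_top_iff.2 fun f _ => FiniteDimensional.mem_span_of_iInf_ker_le_ker fun u hu => ?_
    have hu0 : u = 0 := Subtype.ext <| funext fun i => (Submodule.mem_iInf _).1 hu i
    simp [hu0]
  obtain ⟨b, -, -, hbspan, hbli⟩ :=
    exists_linearIndepOn_extension (linearIndepOn_empty F φ) (Set.empty_subset Set.univ)
  obtain ⟨s, rfl⟩ := b.toFinite.exists_finset_coe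
  let B : Module.Basis s F (Module.Dual F U) := .mk hbli <| by
    rw [← hspan, Submodule.span_le, ← Set.image_eq_range, ← Set.image_univ]
    exact hbspan
  refine ⟨s, fun i => (Module.evalEquiv F U).symm (B.dualBasis i), ?_, fun i j => ?_⟩
  · rw [← Subspace.dual_finrank_eq, Module.finrank_eq_card_basis B, Fintype.card_coe]
  · have := Module.apply_evalEquiv_symm_apply F U (B j) (B.dualBasis i)
    rw [Module.Basis.dualBasis_apply_self, show B j = φ j from Module.Basis.mk_apply ..] at this
    exact this.trans (if_congr eq_comm rfl rfl)

namespace SimpleGraph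

variable {ι F : Type*} [Field F] (G : SimpleGraph ι)

def IsTotallyIsotropic (U : Submodule F (ι → F)) : Prop :=
  ∀ u ∈ U, ∀ v ∈ U, ∀ i j, G.Adj i j → u i * v j = u j * v i

lemma exists_finrank_eq_card_isTotallyIsotropic [DecidableEq ι] {s : Finset ι}
    (hs : G.IsIndepSet s) :
    ∃ U : Submodule F (ι → F), Module.finrank F U = s.card ∧ G.IsTotallyIsotropic U := by
  let e : s → ι → F := fun i => Pi.single (i : ι) 1
  have he : LinearIndependent F e :=
    (Pi.linearIndependent_single_one ι F).comp _ Subtype.val_injective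
  have hsupp : Submodule.span F (Set.range e) ≤ Submodule.pi (↑s)ᶜ fun _ => ⊥ := by
    rw [Submodule.span_le]
    rintro _ ⟨i, rfl⟩ j hj
    simp [e, Pi.single_eq_of_ne (ne_of_mem_of_not_mem i.2 hj).symm]
  refine ⟨Submodule.span F (Set.range e), by rw [finrank_span_eq_card he, Fintype.card_coe],
    fun u hu v hv i j hij => ?_⟩
  have hu := fun k hk => (Submodule.mem_bot F).1 (hsupp hu k hk)
  have hv := fun k hk => (Submodule.mem_bot F).1 (hsupp hv k hk)
  by_cases hi : i ∈ s
  · have hj : j ∉ s := fun hj => hs hi hj hij.ne hij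
    simp [hu j hj, hv j hj]
  · simp [hu i hi, hv i hi]

lemma exists_card_eq_finrank_isIndepSet [Finite ι] [DecidableEq ι] {U : Submodule F (ι → F)}
    (hU : G.IsTotallyIsotropic U) :
    ∃ s : Finset ι, s.card = Module.finrank F U ∧ G.IsIndepSet s := by
  obtain ⟨s, w, hcard, hw⟩ := U.exists_finset_card_eq_finrank_biorthogonal
  refine ⟨s, hcard, fun i hi j hj _ hadj => ?_⟩
  lift i to s using hi
  lift j to s using hj
  have := hU _ (w i).2 _ (w j).2 i j hadj
  simp [hw, Subtype.coe_ne_coe.1 (G.ne_of_adj hadj)] at this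

lemma isIndepSet_coe_iff (s : Finset ι) :
    G.IsIndepSet s ↔ ∀ u ∈ s, ∀ v ∈ s, ¬ G.Adj u v :=
  ⟨fun hs _ hu _ hv huv => hs hu hv huv.ne huv, fun hs u hu v hv _ => hs u hu v hv⟩

end SimpleGraph

section ElementaryAlternating

variable {n : ℕ} {F : Type} [Field F]

lemma dotProduct_elemAlt_mulVec (u v : Fin n → F) (i j : Fin n) :
    u ⬝ᵥ elemAlt n F i j *ᵥ v = u i * v j - u j * v i := by
  simp [elemAlt, sub_mulVec, single_mulVec, ← Pi.single.eq_1, dotProduct_single, mul_comm]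

lemma forall_mem_graphSpace_dotProduct_mulVec_eq_zero_iff (G : SimpleGraph (Fin n))
    (u v : Fin n → F) :
    (∀ A ∈ graphSpace n F G, u ⬝ᵥ A *ᵥ v = 0) ↔ ∀ i j, G.Adj i j → u i * v j = u j * v i := by
  refine ⟨fun h i j hij => ?_, fun h A hA => ?_⟩
  · rw [← sub_eq_zero, ← dotProduct_elemAlt_mulVec]
    exact h _ (Submodule.subset_span ⟨i, j, hij, rfl⟩)
  induction hA using Submodule.span_induction with
  | mem A hA =>
    obtain ⟨i, j, hij, rfl⟩ := hA
    rw [dotProduct_elemAlt_mulVec, h i j hij, sub_self]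
  | zero => simp
  | add A B _ _ hA hB => rw [add_mulVec, dotProduct_add, hA, hB, add_zero]
  | smul c A _ hA => rw [smul_mulVec, dotProduct_smul, hA, smul_zero]

lemma isTotallyIsotropic_iff_graphSpace (G : SimpleGraph (Fin n))
    (U : Submodule F (Fin n → F)) :
    G.IsTotallyIsotropic U ↔ ∀ u ∈ U, ∀ v ∈ U, ∀ A ∈ graphSpace n F G, u ⬝ᵥ A *ᵥ v = 0 := by
  simp only [forall_mem_graphSpace_dotProduct_mulVec_eq_zero_iff, SimpleGraph.IsTotallyIsotropic]

end ElementaryAlternating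

/-- The independence number of `G` equals the totally-isotropic number of `𝒜_G`:
the maximum size of an independent set of `G` equals the maximum dimension of a
totally-isotropic subspace of `𝒜_G`. -/
theorem indepNum_eq_isotropicNum (n : ℕ) (F : Type) [Field F] (G : SimpleGraph (Fin n)) :
    sSup {k : ℕ | ∃ s : Finset (Fin n), s.card = k ∧ ∀ u ∈ s, ∀ v ∈ s, ¬ G.Adj u v} =
      sSup {d : ℕ | ∃ U : Submodule F (Fin n → F), Module.finrank F U = d ∧
        ∀ u ∈ U, ∀ u' ∈ U, ∀ A ∈ graphSpace n F G, u ⬝ᵥ A *ᵥ u' = 0} := by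
  congr 1
  ext d
  simp only [Set.mem_ofPred_eq, ← G.isIndepSet_coe_iff, ← isTotallyIsotropic_iff_graphSpace]
  constructor
  · rintro ⟨s, rfl, hs⟩
    exact G.exists_finrank_eq_card_isTotallyIsotropic hs
  · rintro ⟨U, rfl, hU⟩
    exact G.exists_card_eq_finrank_isIndepSet hU
end
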